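/- arXiv:2504.16437 — 2 statements merged into one kernel-verified Lean document; each statement's English description precedes it below -/
import Mathlib

section
/- Let u, v be strings over alphabet Σ₁ and u', v' strings over alphabet Σ₂ with Σ₁ ∩ Σ₂ = ∅. Then LCS(u ∘ u', v' ∘ v) = max(LCS(u, v), LCS(u', v')). -/
/-- Length of a longest common subsequence of two strings (lists over ℕ). -/
noncomputable def LCS (x y : List ℕ) : ℕ :=
  sSup {k | ∃ s : List ℕ, s.Sublist x ∧ s.Sublist y ∧ s.length = k}

/-- Ulam distance between permutations, via `d_U(σ,τ) = |σ| − LCS(σ,τ)`. -/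
noncomputable def ulamDist (x y : List ℕ) : ℕ := x.length - LCS x y

/-- `π` is a permutation of `[n] = {1,…,n}` viewed as a string. -/
def IsPermOf (n : ℕ) (π : List ℕ) : Prop := π.Perm (List.range' 1 n)

/-!
Write a common subsequence `s` of `u ∘ u'` and `v' ∘ v` as `s₁ ∘ s₂` with `s₁` a subsequence of
`u` and `s₂` of `u'`, and as `t₁ ∘ t₂` with `t₁` a subsequence of `v'` and `t₂` of `v`. The shorter
of `s₁`, `t₁` is a prefix of the other, so its letters lie in both alphabets and it is empty;
likewise for the shorter of `s₂`, `t₂`. Hence `s` is common to `u, v` or to `u', v'`.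
-/

section Sublist

variable {α : Type*} {S T : Set α}

theorem List.eq_nil_of_sublist_of_sublist_of_disjoint (hST : _root_.Disjoint S T) {l x y : List α}
    (hx : ∀ a ∈ x, a ∈ S) (hy : ∀ a ∈ y, a ∈ T) (hlx : l.Sublist x) (hly : l.Sublist y) :
    l = [] :=
  List.eq_nil_iff_forall_not_mem.2 fun a ha =>
    Set.disjoint_left.1 hST (hx a (hlx.subset ha)) (hy a (hly.subset ha))

theorem List.sublist_crossed_append (hST : _root_.Disjoint S T) {u v u' v' s : List α}
    (hu : ∀ a ∈ u, a ∈ S) (hv : ∀ a ∈ v, a ∈ S)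
    (hu' : ∀ a ∈ u', a ∈ T) (hv' : ∀ a ∈ v', a ∈ T)
    (hsu : s.Sublist (u ++ u')) (hsv : s.Sublist (v' ++ v)) :
    (s.Sublist u ∧ s.Sublist v) ∨ (s.Sublist u' ∧ s.Sublist v') := by
  obtain ⟨s₁, s₂, rfl, hs₁, hs₂⟩ := List.sublist_append_iff.1 hsu
  obtain ⟨t₁, t₂, heq, ht₁, ht₂⟩ := List.sublist_append_iff.1 hsv
  rcases List.append_eq_append_iff.1 heq with ⟨w, rfl, rfl⟩ | ⟨w, rfl, rfl⟩
  · obtain rfl : s₁ = [] := List.eq_nil_of_sublist_of_sublist_of_disjoint hST hu hv' hs₁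
      ((List.sublist_append_left s₁ w).trans ht₁)
    obtain rfl : t₂ = [] := List.eq_nil_of_sublist_of_sublist_of_disjoint hST hv hu' ht₂
      ((List.sublist_append_right w t₂).trans hs₂)
    simp only [List.nil_append, List.append_nil] at hs₂ ht₁ ⊢
    exact .inr ⟨hs₂, ht₁⟩
  · obtain rfl : t₁ = [] := List.eq_nil_of_sublist_of_sublist_of_disjoint hST hu hv'
      ((List.sublist_append_left t₁ w).trans hs₁) ht₁
    obtain rfl : s₂ = [] := List.eq_nil_of_sublist_of_sublist_of_disjoint hST hv hu'
      ((List.sublist_append_right w s₂).trans ht₂) hs₂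
    simp only [List.nil_append, List.append_nil] at hs₁ ht₂ ⊢
    exact .inl ⟨hs₁, ht₂⟩

end Sublist

section LCS

theorem bddAbove_commonSublist_lengths (x y : List ℕ) :
    BddAbove {k | ∃ s : List ℕ, s.Sublist x ∧ s.Sublist y ∧ s.length = k} :=
  ⟨x.length, fun _ ⟨_, hx, _, hk⟩ => hk ▸ hx.length_le⟩

theorem length_le_LCS {x y s : List ℕ} (hx : s.Sublist x) (hy : s.Sublist y) :
    s.length ≤ LCS x y :=
  le_csSup (bddAbove_commonSublist_lengths x y) ⟨s, hx, hy, rfl⟩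

theorem exists_sublist_length_eq_LCS (x y : List ℕ) :
    ∃ s : List ℕ, s.Sublist x ∧ s.Sublist y ∧ s.length = LCS x y :=
  Nat.sSup_mem (s := {k | ∃ s : List ℕ, s.Sublist x ∧ s.Sublist y ∧ s.length = k})
    ⟨0, [], List.nil_sublist x, List.nil_sublist y, rfl⟩ (bddAbove_commonSublist_lengths x y)

theorem LCS_mono {x y x' y' : List ℕ} (hx : x.Sublist x') (hy : y.Sublist y') :
    LCS x y ≤ LCS x' y' := by
  obtain ⟨s, hsx, hsy, hs⟩ := exists_sublist_length_eq_LCS x y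
  exact hs ▸ length_le_LCS (hsx.trans hx) (hsy.trans hy)

end LCS

theorem lcs_crossed_append_disjoint (S1 S2 : Set ℕ) (hdisj : Disjoint S1 S2)
    (u v u' v' : List ℕ)
    (hu : ∀ c ∈ u, c ∈ S1) (hv : ∀ c ∈ v, c ∈ S1)
    (hu' : ∀ c ∈ u', c ∈ S2) (hv' : ∀ c ∈ v', c ∈ S2) :
    LCS (u ++ u') (v' ++ v) = max (LCS u v) (LCS u' v') := by
  refine le_antisymm ?_ (max_le ?_ ?_)
  · obtain ⟨s, hsu, hsv, hs⟩ := exists_sublist_length_eq_LCS (u ++ u') (v' ++ v)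
    rw [← hs]
    rcases List.sublist_crossed_append hdisj hu hv hu' hv' hsu hsv with ⟨h, h'⟩ | ⟨h, h'⟩
    · exact (length_le_LCS h h').trans (le_max_left _ _)
    · exact (length_le_LCS h h').trans (le_max_right _ _)
  · exact LCS_mono (List.sublist_append_left u u') (List.sublist_append_right v' v)
  · exact LCS_mono (List.sublist_append_right u u') (List.sublist_append_left v' v)
end

section
/- Let a₁, …, a_n be strings of length L over an alphabet Σ such that each symbol appears at most once in each a_i. Then there exist permutations π₁, …, π_n of a common alphabet of size O(|Σ| + n log n) and an integer K ≥ 0 such that for all distinct i, j ∈ [n], d_H(a_i, a_j) = d_U(π_i, π_j) − K. -/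
/-- Hamming distance between two equal-length strings. -/
def hamDist (x y : List ℕ) : ℕ := ((x.zip y).filter fun p => p.1 != p.2).length

open Finset

theorem le_LCS {s x y : List ℕ} (hx : s.Sublist x) (hy : s.Sublist y) : s.length ≤ LCS x y :=
  le_csSup ⟨x.length, fun _ ⟨_, htx, _, ht⟩ => ht ▸ htx.length_le⟩ ⟨s, hx, hy, rfl⟩

theorem LCS_le {x y : List ℕ} {m : ℕ}
    (h : ∀ s : List ℕ, s.Sublist x → s.Sublist y → s.length ≤ m) : LCS x y ≤ m :=
  csSup_le ⟨0, [], List.nil_sublist x, List.nil_sublist y, rfl⟩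
    fun _ ⟨s, hx, hy, hs⟩ => hs ▸ h s hx hy

theorem List.lt_imp_lt_of_sublist {α β : Type*} [Preorder β] {f g : α → β} {s l₁ l₂ : List α}
    (h₁ : s.Sublist l₁) (h₂ : s.Sublist l₂)
    (hf : l₁.Pairwise (f · < f ·)) (hg : l₂.Pairwise (g · < g ·)) :
    ∀ d ∈ s, ∀ e ∈ s, f d < f e → g d < g e := by
  have hs : s.Pairwise (fun d e => f d < f e ∧ g d < g e) := (hf.sublist h₁).and (hg.sublist h₂)
  intro d hd e he hde
  obtain rfl | hne := eq_or_ne d e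
  · exact absurd hde (lt_irrefl _)
  let R : α → α → Prop := fun d e => (f d < f e ∧ g d < g e) ∨ (f e < f d ∧ g e < g d)
  have : Std.Symm R := ⟨fun _ _ h => h.symm⟩
  have hR : s.Pairwise R := hs.imp Or.inl
  rcases hR.forall hd he hne with h | h
  · exact h.2
  · exact absurd hde h.1.asymm

theorem List.Nodup.length_le_card_of_forall_mem {α : Type*} [DecidableEq α] {x : List α}
    {A : Finset α} (hx : x.Nodup) (hA : ∀ c ∈ x, c ∈ A) : x.length ≤ #A := by
  rw [← List.toFinset_card_of_nodup hx]
  exact card_le_card fun c hc => hA c (List.mem_toFinset.1 hc)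

theorem List.mem_zip_self_iff {α : Type*} [DecidableEq α] {x y : List α} (hx : x.Nodup)
    (hy : y.Nodup) {c : α} :
    (c, c) ∈ x.zip y ↔ c ∈ x ∧ c ∈ y ∧ x.idxOf c = y.idxOf c := by
  constructor
  · intro h
    obtain ⟨k, hk, hck⟩ := List.mem_iff_getElem.1 h
    rw [List.length_zip] at hk
    rw [List.getElem_zip, Prod.mk.injEq] at hck
    obtain ⟨hxk, hyk⟩ := hck
    refine ⟨hxk ▸ List.getElem_mem _, hyk ▸ List.getElem_mem _, ?_⟩
    rw [← hxk, hx.idxOf_getElem, ← hyk.trans hxk.symm, hy.idxOf_getElem]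
  · rintro ⟨hcx, hcy, hidx⟩
    have hkx := List.idxOf_lt_length_iff.2 hcx
    have hky := List.idxOf_lt_length_iff.2 hcy
    refine List.mem_iff_getElem.2 ⟨x.idxOf c, by simp only [List.length_zip]; omega, ?_⟩
    simp only [List.getElem_zip, List.getElem_idxOf, Prod.mk.injEq, true_and]
    grind

theorem card_filter_idxOf_eq_add_hamDist {x y : List ℕ} (hx : x.Nodup) (hy : y.Nodup)
    (hxy : x.length = y.length) :
    #{c ∈ x.toFinset | c ∈ y ∧ x.idxOf c = y.idxOf c} + hamDist x y = x.length := by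
  set M := ((x.zip y).filter fun p => !(p.1 != p.2)).map Prod.fst
  have hM : M.Nodup := by
    refine List.Nodup.sublist ?_ hx
    conv_rhs => rw [← List.map_fst_zip hxy.le (l₂ := y)]
    exact List.filter_sublist.map _
  have hMx : M.toFinset = {c ∈ x.toFinset | c ∈ y ∧ x.idxOf c = y.idxOf c} := by
    ext c
    simp [M, ← List.mem_zip_self_iff hx hy]
  rw [← hMx, List.toFinset_card_of_nodup hM, List.length_map, hamDist, add_comm,
    ← List.length_eq_length_filter_add, List.length_zip, hxy, min_self]

section SlotPerm

variable {A : Finset ℕ} {S : ℕ} {σ τ : ℕ → ℕ}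

-- Letter `c` is encoded as `2 * c` and separator `r` as `2 * r + 1`; `slotKey σ e` is the position
-- of `e` in `slotPerm A S σ`: separator `r` at `2 * r`, letter `c` at `2 * σ c + 1`.
def slotKey (σ : ℕ → ℕ) (e : ℕ) : ℕ := if e % 2 = 1 then e - 1 else 2 * σ (e / 2) + 1

def slotAlphabet (A : Finset ℕ) (S : ℕ) : Finset ℕ :=
  A.image (2 * ·) ∪ (range (S + 1)).image (2 * · + 1)

noncomputable def slotPerm (A : Finset ℕ) (S : ℕ) (σ : ℕ → ℕ) : List ℕ :=
  (slotAlphabet A S).toList.mergeSort fun d e => slotKey σ d ≤ slotKey σ e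

theorem slotKey_cases (σ : ℕ → ℕ) (e : ℕ) :
    (e % 2 = 1 ∧ slotKey σ e + 1 = e) ∨ (e % 2 = 0 ∧ slotKey σ e = 2 * σ (e / 2) + 1) := by
  unfold slotKey; split_ifs <;> omega

theorem mem_slotAlphabet {e : ℕ} :
    e ∈ slotAlphabet A S ↔ (e % 2 = 0 ∧ e / 2 ∈ A) ∨ (e % 2 = 1 ∧ e / 2 ≤ S) := by
  simp only [slotAlphabet, mem_union, mem_image, mem_range]
  constructor
  · rintro (⟨c, hc, rfl⟩ | ⟨r, hr, rfl⟩)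
    · exact Or.inl ⟨by omega, by simpa using hc⟩
    · exact Or.inr (by omega)
  · rintro (⟨he, hA⟩ | ⟨he, hS⟩)
    · exact Or.inl ⟨e / 2, hA, by omega⟩
    · exact Or.inr ⟨e / 2, by omega, by omega⟩

theorem card_slotAlphabet : #(slotAlphabet A S) = #A + (S + 1) := by
  rw [slotAlphabet, card_union_of_disjoint,
    card_image_of_injective _ (fun a b h => by simpa using h),
    card_image_of_injective _ (fun a b h => by simpa using h), card_range]
  simp only [disjoint_left, mem_image]
  rintro _ ⟨c, -, rfl⟩ ⟨r, -, h⟩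
  omega

theorem slotPerm_perm : (slotPerm A S σ).Perm (slotAlphabet A S).toList :=
  List.mergeSort_perm _ _

theorem nodup_slotPerm : (slotPerm A S σ).Nodup :=
  slotPerm_perm.nodup_iff.2 (nodup_toList _)

theorem toFinset_slotPerm : (slotPerm A S σ).toFinset = slotAlphabet A S := by
  ext e
  simp [slotPerm_perm.mem_iff]

theorem length_slotPerm : (slotPerm A S σ).length = #A + (S + 1) := by
  rw [slotPerm_perm.length_eq, length_toList, card_slotAlphabet]

theorem slotKey_injOn (hσ : Set.InjOn σ A) : Set.InjOn (slotKey σ) (slotAlphabet A S) := by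
  intro d hd e he hde
  rw [mem_coe, mem_slotAlphabet] at hd he
  have hd' := slotKey_cases σ d
  have he' := slotKey_cases σ e
  rcases hd with ⟨hd, hdA⟩ | hd <;> rcases he with ⟨he, heA⟩ | he
  · have := hσ hdA heA (by omega)
    omega
  all_goals omega

theorem pairwise_slotPerm (hσ : Set.InjOn σ A) :
    (slotPerm A S σ).Pairwise (slotKey σ · < slotKey σ ·) := by
  have hle := List.pairwise_mergeSort (le := fun d e => slotKey σ d ≤ slotKey σ e)
    (fun _ _ _ h₁ h₂ => by simp only [decide_eq_true_eq] at *; omega)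
    (fun _ _ => by simpa using le_total _ _) (slotAlphabet A S).toList
  refine (hle.and nodup_slotPerm).imp_of_mem fun {d e} hd he h => ?_
  have hd' : d ∈ slotAlphabet A S := by simpa using slotPerm_perm.subset hd
  have he' : e ∈ slotAlphabet A S := by simpa using slotPerm_perm.subset he
  exact lt_of_le_of_ne (by simpa using h.1) fun hk => h.2 (slotKey_injOn hσ hd' he' hk)

theorem filter_slotPerm_eq (hσ : Set.InjOn σ A) (hτ : Set.InjOn τ A) :
    (slotPerm A S σ).filter (fun e => slotKey σ e = slotKey τ e) =
      (slotPerm A S τ).filter (fun e => slotKey σ e = slotKey τ e) := by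
  refine List.Perm.eq_of_pairwise (le := (slotKey σ · < slotKey σ ·))
    (fun _ _ _ _ h h' => absurd h' h.asymm) ((pairwise_slotPerm hσ).filter _) ?_
    ((slotPerm_perm.trans slotPerm_perm.symm).filter _)
  refine ((pairwise_slotPerm hτ).filter _).imp_of_mem fun hd he h => ?_
  simp only [List.mem_filter, decide_eq_true_eq] at hd he
  omega

theorem length_filter_slotPerm (P : ℕ → Prop) [DecidablePred P] :
    ((slotPerm A S σ).filter (fun e => P e)).length = #{e ∈ slotAlphabet A S | P e} := by
  rw [← List.toFinset_card_of_nodup (nodup_slotPerm.filter _), List.toFinset_filter,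
    toFinset_slotPerm]
  simp

theorem length_le_of_sublist_slotPerm (hσ : Set.InjOn σ A) (hτ : Set.InjOn τ A)
    (hσS : ∀ c ∈ A, σ c < S) (hτS : ∀ c ∈ A, τ c < S) {s : List ℕ}
    (hsσ : s.Sublist (slotPerm A S σ)) (hsτ : s.Sublist (slotPerm A S τ)) :
    s.length ≤ #{e ∈ slotAlphabet A S | slotKey σ e = slotKey τ e} := by
  have hmem : ∀ e ∈ s, e ∈ slotAlphabet A S := fun e he => by
    simpa using slotPerm_perm.subset (hsσ.subset he)
  have hchain := List.lt_imp_lt_of_sublist hsσ hsτ (pairwise_slotPerm hσ) (pairwise_slotPerm hτ)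
  rw [← List.toFinset_card_of_nodup (nodup_slotPerm.sublist hsσ)]
  -- A letter in two different slots goes to the separator just after the earlier slot, which
  -- `s` cannot contain, and no other letter of `s` goes there.
  refine card_le_card_of_injOn
    (fun e => if slotKey σ e = slotKey τ e then e else min (slotKey σ e) (slotKey τ e) + 2) ?_ ?_
  · intro e he
    rw [mem_coe, List.mem_toFinset] at he
    have hσe := slotKey_cases σ e
    have hτe := slotKey_cases τ e
    rw [mem_coe, mem_filter]
    dsimp only
    split_ifs with h
    · exact ⟨hmem e he, h⟩
    have hσm := slotKey_cases σ (min (slotKey σ e) (slotKey τ e) + 2)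
    have hτm := slotKey_cases τ (min (slotKey σ e) (slotKey τ e) + 2)
    rw [mem_slotAlphabet]
    rcases mem_slotAlphabet.1 (hmem e he) with ⟨he2, hA⟩ | ⟨he2, -⟩
    · have := hσS _ hA
      have := hτS _ hA
      omega
    · omega
  · intro d hd e he hde
    rw [mem_coe, List.mem_toFinset] at hd he
    by_contra hne
    have hσde : slotKey σ d ≠ slotKey σ e := fun h =>
      hne (slotKey_injOn hσ (hmem d hd) (hmem e he) h)
    have hτde : slotKey τ d ≠ slotKey τ e := fun h =>
      hne (slotKey_injOn hτ (hmem d hd) (hmem e he) h)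
    have := hchain d hd e he
    have := hchain e he d hd
    have := slotKey_cases σ d
    have := slotKey_cases τ d
    have := slotKey_cases σ e
    have := slotKey_cases τ e
    simp only at hde
    split_ifs at hde <;> omega

theorem LCS_slotPerm (hσ : Set.InjOn σ A) (hτ : Set.InjOn τ A)
    (hσS : ∀ c ∈ A, σ c < S) (hτS : ∀ c ∈ A, τ c < S) :
    LCS (slotPerm A S σ) (slotPerm A S τ) =
      #{e ∈ slotAlphabet A S | slotKey σ e = slotKey τ e} := by
  refine le_antisymm (LCS_le fun s => length_le_of_sublist_slotPerm hσ hτ hσS hτS) ?_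
  rw [← length_filter_slotPerm]
  refine le_LCS List.filter_sublist ?_
  rw [filter_slotPerm_eq hσ hτ]
  exact List.filter_sublist

theorem ulamDist_slotPerm (hσ : Set.InjOn σ A) (hτ : Set.InjOn τ A)
    (hσS : ∀ c ∈ A, σ c < S) (hτS : ∀ c ∈ A, τ c < S) :
    ulamDist (slotPerm A S σ) (slotPerm A S τ) = #{c ∈ A | σ c ≠ τ c} := by
  have hsplit := card_filter_add_card_filter_not (s := slotAlphabet A S)
    (fun e => slotKey σ e = slotKey τ e)
  have hdisagree : {e ∈ slotAlphabet A S | ¬slotKey σ e = slotKey τ e} =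
      {c ∈ A | σ c ≠ τ c}.image (2 * ·) := by
    ext e
    simp only [mem_filter, mem_image, mem_slotAlphabet]
    have := slotKey_cases σ e
    have := slotKey_cases τ e
    constructor
    · rintro ⟨⟨he, hA⟩ | ⟨he, -⟩, hne⟩
      · exact ⟨e / 2, ⟨hA, fun h => hne (by omega)⟩, by omega⟩
      · omega
    · rintro ⟨c, ⟨hA, hne⟩, rfl⟩
      refine ⟨Or.inl ⟨by omega, by simpa using hA⟩, ?_⟩
      simp only [Nat.mul_div_cancel_left c two_pos] at *
      omega
  rw [ulamDist, LCS_slotPerm hσ hτ hσS hτS, length_slotPerm, ← card_slotAlphabet, ← hsplit,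
    hdisagree, card_image_of_injective _ (fun a b h => by simpa using h)]
  omega

end SlotPerm

theorem Nat.eq_of_add_mod_eq_add_mod {k a b T : ℕ} (ha : a < T) (hb : b < T)
    (h : (k + a) % T = (k + b) % T) : a = b := by
  simpa [Nat.ModEq, Nat.mod_eq_of_lt ha, Nat.mod_eq_of_lt hb] using Nat.ModEq.add_left_cancel' k h

section HammingSlot

variable {Sig : Finset ℕ} {T i j : ℕ} {x y : List ℕ} {c : ℕ}

noncomputable def hammingSlot (Sig : Finset ℕ) (T i : ℕ) (x : List ℕ) (c : ℕ) : ℕ :=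
  if c ∈ x then x.idxOf c else x.length + (Sig.toList.idxOf c + i) % T

theorem hammingSlot_lt (hT : 0 < T) : hammingSlot Sig T i x c < x.length + T := by
  unfold hammingSlot
  split_ifs with hc
  · have := List.idxOf_lt_length_iff.2 hc
    omega
  · have := Nat.mod_lt (Sig.toList.idxOf c + i) hT
    omega

theorem hammingSlot_injOn (hT : #Sig ≤ T) : Set.InjOn (hammingSlot Sig T i x) Sig := by
  intro c hc d hd h
  rw [mem_coe, ← mem_toList] at hc hd
  have hcT := List.idxOf_lt_length_iff.2 hc
  have hdT := List.idxOf_lt_length_iff.2 hd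
  rw [length_toList] at hcT hdT
  unfold hammingSlot at h
  split_ifs at h with hcx hdx hdx
  · exact (List.idxOf_inj hcx).1 h
  · have := List.idxOf_lt_length_iff.2 hcx
    omega
  · have := List.idxOf_lt_length_iff.2 hdx
    omega
  · rw [add_comm _ i, add_comm _ i] at h
    exact (List.idxOf_inj hc).1 (Nat.eq_of_add_mod_eq_add_mod (T := T) (by omega) (by omega)
      (Nat.add_left_cancel h))

theorem hammingSlot_eq_hammingSlot_iff (hij : i ≠ j) (hi : i < T) (hj : j < T)
    (hxy : x.length = y.length) :
    hammingSlot Sig T i x c = hammingSlot Sig T j y c ↔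
      c ∈ x ∧ c ∈ y ∧ x.idxOf c = y.idxOf c := by
  unfold hammingSlot
  split_ifs with hcx hcy hcy
  · simp [hcx, hcy]
  · have := List.idxOf_lt_length_iff.2 hcx
    simp only [hcy, false_and, and_false, iff_false]
    omega
  · have := List.idxOf_lt_length_iff.2 hcy
    simp only [hcx, false_and, iff_false]
    omega
  · simp only [hcx, false_and, iff_false]
    intro h
    exact hij (Nat.eq_of_add_mod_eq_add_mod (k := Sig.toList.idxOf c) hi hj (by omega))

theorem card_filter_hammingSlot_ne (hij : i ≠ j) (hi : i < T) (hj : j < T) (hx : x.Nodup)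
    (hy : y.Nodup) (hxSig : ∀ c ∈ x, c ∈ Sig) (hxy : x.length = y.length) :
    #{c ∈ Sig | hammingSlot Sig T i x c ≠ hammingSlot Sig T j y c} =
      hamDist x y + (#Sig - x.length) := by
  have hagree : {c ∈ Sig | hammingSlot Sig T i x c = hammingSlot Sig T j y c} =
      {c ∈ x.toFinset | c ∈ y ∧ x.idxOf c = y.idxOf c} := by
    ext c
    simp only [mem_filter, hammingSlot_eq_hammingSlot_iff hij hi hj hxy, List.mem_toFinset]
    exact ⟨fun h => ⟨h.2.1, h.2.2⟩, fun h => ⟨hxSig c h.1, h.1, h.2⟩⟩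
  have hsplit := card_filter_add_card_filter_not (s := Sig)
    (fun c => hammingSlot Sig T i x c = hammingSlot Sig T j y c)
  have := card_filter_idxOf_eq_add_hamDist hx hy hxy
  have := hx.length_le_card_of_forall_mem hxSig
  simp only [← ne_eq, hagree] at hsplit
  omega

end HammingSlot

theorem embed_hamming_no_repeats :
    ∃ C : ℕ, ∀ (n L : ℕ) (Sig : Finset ℕ) (a : Fin n → List ℕ),
      (∀ i, (a i).length = L) → (∀ i, ∀ c ∈ a i, c ∈ Sig) → (∀ i, (a i).Nodup) →
      ∃ (Gam : Finset ℕ) (π : Fin n → List ℕ) (K : ℕ),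
        Gam.card ≤ C * (Sig.card + n * (Nat.log 2 n + 1)) ∧
        (∀ i, (π i).Nodup ∧ (π i).toFinset = Gam) ∧
        (∀ i j, i ≠ j → ulamDist (π i) (π j) = hamDist (a i) (a j) + K) := by
  refine ⟨3, fun n L Sig a hlen hsub hnd => ?_⟩
  rcases Nat.eq_zero_or_pos n with rfl | hn
  · exact ⟨∅, fun i => i.elim0, 0, by simp, fun i => i.elim0, fun i => i.elim0⟩
  have hL : L ≤ #Sig := hlen ⟨0, hn⟩ ▸ (hnd _).length_le_card_of_forall_mem (hsub _)
  set T := #Sig + n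
  let σ (i : Fin n) : ℕ → ℕ := hammingSlot Sig T i (a i)
  have hσ (i : Fin n) : Set.InjOn (σ i) Sig := hammingSlot_injOn (by omega)
  have hσS (i : Fin n) : ∀ c ∈ Sig, σ i c < L + T := fun _ _ =>
    hlen i ▸ hammingSlot_lt (by omega)
  refine ⟨slotAlphabet Sig (L + T), fun i => slotPerm Sig (L + T) (σ i), #Sig - L, ?_,
    fun i => ⟨nodup_slotPerm, toFinset_slotPerm⟩, fun i j hij => ?_⟩
  · have := Nat.le_mul_of_pos_right n (Nat.add_one_pos (Nat.log 2 n))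
    rw [card_slotAlphabet]
    omega
  · rw [ulamDist_slotPerm (hσ i) (hσ j) (hσS i) (hσS j),
      card_filter_hammingSlot_ne (Fin.val_ne_of_ne hij) (by omega) (by omega) (hnd i) (hnd j)
        (hsub i) ((hlen i).trans (hlen j).symm), hlen i]
end
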